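/- Let Q ≥ 1 and N ≥ 1, let Z be a finite emission alphabet, let y : Fin N → Z be a fixed sequence of emissions, let a : Fin Q → ℂ be an initial amplitude vector, and let c : Fin Q → Fin Q → Z → ℂ be transition amplitudes (in the paper, c i j z = exp(I·f(P_{i,j}(z))) for admissible transitions of the hidden Markov model and 0 otherwise). Suppose V : Z → Matrix (Fin Q × Fin Q) (Fin Q × Fin Q) ℂ is a family of matrices such that for every z ∈ Z and every i ∈ Fin Q, V z maps the standard basis vector e_{(i,0)} to ∑_{j} (c i j z) · e_{(i,j)}. For 1 ≤ n ≤ N let M_n be the matrix on ℂ^{(Fin (N+1) → Fin Q)} that acts as V (y n) on the coordinates (n−1, n) and as the identity on all other coordinates, i.e. M_n[π, σ] = (V (y n))[(π(n−1), π(n)), (σ(n−1), σ(n))] · ∏_{m ∉ {n−1, n}} δ_{π(m), σ(m)}. Then the product M_N ⋯ M_2 M_1 applied to the vector π ↦ a(π(0)) · ∏_{m=1}^{N} δ_{π(m), 0} (the state |ψ₀⟩|0⟩⋯|0⟩) equals the vector π ↦ a(π(0)) · ∏_{n=1}^{N} c (π(n−1)) (π(n)) (y n); that is, the resulting state is the superposition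 over all paths π through the lattice, each carrying the product of its transition amplitudes. -/

import Mathlib

/-!
After the first `k` gates the register holds the partial superposition in which sites
`1, …, k` carry every possible path prefix, weighted by the product of its step amplitudes,
while sites `k + 1, …, N` are still `|0⟩`. Gate `k + 1` only sees site `k + 1` in state `|0⟩`,
so by its defining property it spreads that site over all states `j` with amplitude
`c (π k) j (y k)`, which is exactly the next partial superposition.
-/

open Finset Function Matrix

namespace Matrix

variable {ι R : Type*} [Fintype ι] [DecidableEq ι] [Semiring R]

theorem list_ofFn_reverse_prod_mulVec :
    ∀ {N : ℕ} (M : Fin N → Matrix ι ι R) (ψ : Fin (N + 1) → ι → R),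
      (∀ n, M n *ᵥ ψ n.castSucc = ψ n.succ) →
        (List.ofFn M).reverse.prod *ᵥ ψ 0 = ψ (Fin.last N)
  | 0, _, _, _ => by simp
  | N + 1, M, ψ, hstep => by
    have ih := list_ofFn_reverse_prod_mulVec (fun n => M n.castSucc) (fun k => ψ k.castSucc)
      (fun n => hstep n.castSucc)
    rw [Fin.castSucc_zero] at ih
    rw [List.ofFn_succ', List.concat_eq_append, List.reverse_append, List.reverse_singleton,
      List.singleton_append, List.prod_cons, ← mulVec_mulVec, ih]
    exact hstep (Fin.last N)

end Matrix

section TwoSiteGate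

variable {ι α R : Type*} [Fintype ι] [DecidableEq ι] [Fintype α] [DecidableEq α] [Zero α]
  [CommSemiring R]

def gateOn (s t : ι) (G : Matrix (α × α) (α × α) R) : Matrix (ι → α) (ι → α) R :=
  fun π σ => G (π s, π t) (σ s, σ t) *
    ∏ m ∈ univ.filter (fun m => m ≠ s ∧ m ≠ t), (if π m = σ m then (1 : R) else 0)

theorem gateOn_mulVec_apply_of_controlled {s t : ι} (hst : s ≠ t)
    {G : Matrix (α × α) (α × α) R} {g : α → α → R}
    (hG : ∀ i, G *ᵥ Pi.single (i, 0) 1 = fun p => if p.1 = i then g i p.2 else 0)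
    {v : (ι → α) → R} (hv : ∀ σ, σ t ≠ 0 → v σ = 0) (π : ι → α) :
    (gateOn s t G *ᵥ v) π = g (π s) (π t) * v (update π t 0) := by
  have hG' : ∀ i p, G p (i, 0) = if p.1 = i then g i p.2 else 0 := fun i p => by
    simpa [mulVec_single_one] using congrFun (hG i) p
  rw [mulVec, dotProduct, sum_eq_single (update π t 0)]
  · have hrest : ∏ m ∈ univ.filter (fun m => m ≠ s ∧ m ≠ t),
        (if π m = update π t 0 m then (1 : R) else 0) = 1 :=
      prod_eq_one fun m hm => by simp [update_of_ne (mem_filter.1 hm).2.2]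
    simp [gateOn, hrest, update_of_ne hst, hG']
  -- Any other `σ` with `σ t = 0` differs from `π` at the control site, where `hG'` kills the
  -- term, or at an idle site, where the identity factor does.
  · intro σ _ hσ
    by_cases hσt : σ t = 0
    · obtain ⟨m, hm⟩ := ne_iff.1 hσ
      have hmt : m ≠ t := by rintro rfl; simp [hσt] at hm
      rw [update_of_ne hmt] at hm
      by_cases hms : m = s
      · subst hms
        simp [gateOn, hσt, hG', Ne.symm hm]
      · have hzero : ∏ m ∈ univ.filter (fun m => m ≠ s ∧ m ≠ t),
            (if π m = σ m then (1 : R) else 0) = 0 :=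
          prod_eq_zero (i := m) (by simp [hms, hmt]) (by simp [Ne.symm hm])
        simp [gateOn, hzero]
    · simp [hv σ hσt]
  · simp

end TwoSiteGate

section Lattice

variable {N : ℕ} {α R : Type*} [Zero α] [DecidableEq α] [CommSemiring R]

def latticeState (a : α → R) (w : Fin N → α → α → R) (k : Fin (N + 1))
    (π : Fin (N + 1) → α) : R :=
  a (π 0) * ∏ m : Fin N,
    if m.castSucc < k then w m (π m.castSucc) (π m.succ) else if π m.succ = 0 then 1 else 0

variable (a : α → R) (w : Fin N → α → α → R)

theorem latticeState_zero :
    latticeState a w 0 = fun π => a (π 0) * ∏ n : Fin N, if π n.succ = 0 then (1 : R) else 0 := by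
  ext π
  simp [latticeState]

theorem latticeState_last :
    latticeState a w (Fin.last N) = fun π => a (π 0) * ∏ n, w n (π n.castSucc) (π n.succ) := by
  ext π
  simp [latticeState, Fin.castSucc_lt_last]

theorem latticeState_castSucc_eq_zero (n : Fin N) {σ : Fin (N + 1) → α} (hσ : σ n.succ ≠ 0) :
    latticeState a w n.castSucc σ = 0 :=
  mul_eq_zero_of_right _ (prod_eq_zero (mem_univ n) (by simp [hσ]))

theorem mul_latticeState_castSucc_update (n : Fin N) (π : Fin (N + 1) → α) :
    w n (π n.castSucc) (π n.succ) * latticeState a w n.castSucc (update π n.succ 0) =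
      latticeState a w n.succ π := by
  have hfactor : ∀ m ∈ univ.erase n,
      (if m.castSucc < n.castSucc then w m (update π n.succ 0 m.castSucc)
          (update π n.succ 0 m.succ)
        else if update π n.succ 0 m.succ = 0 then (1 : R) else 0) =
      if m.castSucc < n.succ then w m (π m.castSucc) (π m.succ)
        else if π m.succ = 0 then 1 else 0 := by
    intro m hm
    have hmn : m ≠ n := (mem_erase.1 hm).1
    rw [update_of_ne (Fin.succ_injective _ |>.ne hmn)]
    rcases lt_or_gt_of_ne hmn with hlt | hgt
    · have hcs : m.castSucc ≠ n.succ := (Fin.castSucc_lt_succ_iff.2 hlt.le).ne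
      simp [update_of_ne hcs, hlt, Fin.castSucc_lt_succ_iff.2 hlt.le]
    · simp [hgt.not_gt, Fin.castSucc_lt_succ_iff, hgt.not_ge]
  unfold latticeState
  rw [update_of_ne (Fin.succ_ne_zero n).symm, ← mul_prod_erase _ _ (mem_univ n),
    ← mul_prod_erase _ _ (mem_univ n), prod_congr rfl hfactor]
  simp only [lt_irrefl, if_false, update_self, if_true, Fin.castSucc_lt_succ]
  ring

end Lattice

theorem qva_lattice_building_general
    (Q N : ℕ) [NeZero Q]
    (Z : Type*)
    (y : Fin N → Z)
    (a : Fin Q → ℂ)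
    (c : Fin Q → Fin Q → Z → ℂ)
    (V : Z → Matrix (Fin Q × Fin Q) (Fin Q × Fin Q) ℂ)
    (hV : ∀ (z : Z) (i : Fin Q),
      (V z).mulVec (Pi.single (i, (0 : Fin Q)) 1) =
        fun p => if p.1 = i then c i p.2 z else 0)
    (M : Fin N → Matrix (Fin (N + 1) → Fin Q) (Fin (N + 1) → Fin Q) ℂ)
    (hM : ∀ (n : Fin N) (π σ : Fin (N + 1) → Fin Q),
      M n π σ =
        V (y n) (π n.castSucc, π n.succ) (σ n.castSucc, σ n.succ) *
          ∏ m ∈ Finset.univ.filter (fun m => m ≠ n.castSucc ∧ m ≠ n.succ),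
            (if π m = σ m then (1 : ℂ) else 0)) :
    ((List.ofFn M).reverse.prod).mulVec
        (fun π => a (π 0) * ∏ n : Fin N, (if π n.succ = 0 then (1 : ℂ) else 0)) =
      fun π => a (π 0) * ∏ n : Fin N, c (π n.castSucc) (π n.succ) (y n) := by
  let w : Fin N → Fin Q → Fin Q → ℂ := fun n i j => c i j (y n)
  have hstep : ∀ n, M n *ᵥ latticeState a w n.castSucc = latticeState a w n.succ := by
    intro n
    have hM' : M n = gateOn n.castSucc n.succ (V (y n)) := funext₂ (hM n)
    ext π
    rw [hM', gateOn_mulVec_apply_of_controlled (g := w n) Fin.castSucc_lt_succ.ne (hV (y n))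
      (fun σ => latticeState_castSucc_eq_zero a w n), mul_latticeState_castSucc_update]
  rw [← latticeState_zero, list_ofFn_reverse_prod_mulVec M _ hstep, latticeState_last]

/-- The lattice-building step `G_φ` of the quantum Viterbi algorithm: chaining the
classically controlled gates `V (y n)` along the lattice, starting from the state
`|ψ₀⟩|0⟩⋯|0⟩`, produces the superposition over all paths `π` through the hidden Markov
model lattice, each path carrying the product of its transition amplitudes. -/
theorem qva_lattice_building
    (Q N : ℕ) [NeZero Q] (hN : 1 ≤ N)
    (Z : Type*) [Fintype Z]
    (y : Fin N → Z)
    (a : Fin Q → ℂ)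
    (c : Fin Q → Fin Q → Z → ℂ)
    (V : Z → Matrix (Fin Q × Fin Q) (Fin Q × Fin Q) ℂ)
    (hV : ∀ (z : Z) (i : Fin Q),
      (V z).mulVec (Pi.single (i, (0 : Fin Q)) 1) =
        fun p => if p.1 = i then c i p.2 z else 0)
    (M : Fin N → Matrix (Fin (N + 1) → Fin Q) (Fin (N + 1) → Fin Q) ℂ)
    (hM : ∀ (n : Fin N) (π σ : Fin (N + 1) → Fin Q),
      M n π σ =
        V (y n) (π n.castSucc, π n.succ) (σ n.castSucc, σ n.succ) *
          ∏ m ∈ Finset.univ.filter (fun m => m ≠ n.castSucc ∧ m ≠ n.succ),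
            (if π m = σ m then (1 : ℂ) else 0)) :
    ((List.ofFn M).reverse.prod).mulVec
        (fun π => a (π 0) * ∏ n : Fin N, (if π n.succ = 0 then (1 : ℂ) else 0)) =
      fun π => a (π 0) * ∏ n : Fin N, c (π n.castSucc) (π n.succ) (y n) :=
  qva_lattice_building_general Q N Z y a c V hV M hM
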